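/- arXiv:2512.25042 — 7 statements merged into one kernel-verified Lean document; each statement's English description precedes it below -/
import Mathlib

section
/- For any integers n ≥ 2 and 0 ≤ Y ≤ n, one has Σ_{j=0}^{n−Y} (−1)^j · [(n−Y)! / (n−Y−j)!] · [Y! / (Y+j)!] = Y/n. -/
/-!
With `m = n - Y`, the `j`-th term is `(-1)^j m^(j falling) / (Y+1)^(j rising)`, i.e.
`(-1)^j m.descFactorial j / (Y + 1).ascFactorial j`. The sum telescopes: `(Y + m)` times its
partial sum up to `k` equals `Y + (-1)^k m.descFactorial (k + 1) / (Y + 1).ascFactorial k`, and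
the correction term vanishes at `k = m` because `m.descFactorial (m + 1) = 0`.
-/

open Finset Nat

theorem Nat.cast_descFactorial_succ {R : Type*} [Ring R] (m k : ℕ) :
    (m.descFactorial (k + 1) : R) = ((m : R) - k) * m.descFactorial k := by
  rcases le_or_gt k m with hkm | hmk
  · rw [descFactorial_succ, cast_mul, cast_sub hkm]
  · rw [descFactorial_of_lt hmk, descFactorial_of_lt (by omega)]
    simp

section CharZeroField

variable {K : Type*} [Field K] [CharZero K]

theorem Nat.cast_factorial_div_factorial_sub {m j : ℕ} (h : j ≤ m) :
    (m ! : K) / (m - j)! = m.descFactorial j := by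
  rw [div_eq_iff (cast_ne_zero.mpr (m - j).factorial_ne_zero),
    ← factorial_mul_descFactorial h, cast_mul, mul_comm]

theorem Nat.cast_factorial_div_factorial_add (Y j : ℕ) :
    (Y ! : K) / (Y + j)! = 1 / (Y + 1).ascFactorial j := by
  rw [← factorial_mul_ascFactorial, cast_mul,
    div_mul_cancel_left₀ (cast_ne_zero.mpr Y.factorial_ne_zero), one_div]

theorem mul_sum_range_neg_one_pow_descFactorial_div_ascFactorial (Y m k : ℕ) :
    ((Y : K) + m) * ∑ j ∈ range (k + 1),
        (-1 : K) ^ j * m.descFactorial j / (Y + 1).ascFactorial j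
      = Y + (-1 : K) ^ k * m.descFactorial (k + 1) / (Y + 1).ascFactorial k := by
  induction k with
  | zero => simp
  | succ k ih =>
    have hasc : ((Y + 1).ascFactorial k : K) ≠ 0 := cast_ne_zero.mpr (ascFactorial_pos Y k).ne'
    have hYk : (Y : K) + 1 + k ≠ 0 := by norm_cast; omega
    rw [sum_range_succ, mul_add, ih, cast_descFactorial_succ m (k + 1), ascFactorial_succ]
    push_cast
    field_simp
    ring

theorem sum_range_neg_one_pow_descFactorial_div_ascFactorial (Y m : ℕ) (h : Y + m ≠ 0) :
    ∑ j ∈ range (m + 1), (-1 : K) ^ j * m.descFactorial j / (Y + 1).ascFactorial j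
      = Y / (Y + m) := by
  have hYm : (Y : K) + m ≠ 0 := by exact_mod_cast h
  rw [eq_div_iff hYm, mul_comm, mul_sum_range_neg_one_pow_descFactorial_div_ascFactorial,
    descFactorial_of_lt m.lt_succ_self]
  simp

end CharZeroField

/-- For integers `n ≥ 2` and `0 ≤ Y ≤ n`,
`Σ_{j=0}^{n−Y} (−1)^j · [(n−Y)!/(n−Y−j)!] · [Y!/(Y+j)!] = Y/n`. -/
theorem binomial_comb_identity (n Y : ℕ) (hn : 2 ≤ n) (hY : Y ≤ n) :
    ∑ j ∈ Finset.range (n - Y + 1),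
        (-1 : ℚ) ^ j * ((n - Y).factorial : ℚ) / ((n - Y - j).factorial : ℚ)
          * ((Y.factorial : ℚ) / ((Y + j).factorial : ℚ))
    = (Y : ℚ) / (n : ℚ) := by
  obtain ⟨m, rfl⟩ : ∃ m, n = Y + m := ⟨n - Y, by omega⟩
  rw [Nat.add_sub_cancel_left, Nat.cast_add,
    ← sum_range_neg_one_pow_descFactorial_div_ascFactorial Y m (by omega)]
  refine sum_congr rfl fun j hj => ?_
  rw [mul_div_assoc, cast_factorial_div_factorial_sub (Nat.lt_succ_iff.mp (mem_range.mp hj)),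
    cast_factorial_div_factorial_add]
  ring
end

section
/- For any integers n ≥ 2 and 0 ≤ Y ≤ n, one has Σ_{j=0}^{n−Y} (j/n)·(−1)^j · [(n−Y)! / (n−Y−j)!] · [Y! / (Y+j)!] = − Y(n−Y) / (n²(n−1)). -/
/-! With `m = n - Y` and `t j = (-1)^j · m.descFactorial j · Y!/(Y+j)!`, the ratio `t (j+1) / t j`
is `(j - m)/(Y + 1 + j)`, so the sum is Gosper-summable: `G j = (Y + j)(m - n j) t j` satisfies
`G (j+1) - G j = n (n - 1) j t j`, and `G (m + 1) = 0`, `G 0 = Y m`. -/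

open Finset Nat

theorem mul_sum_range_natCast_mul_of_recurrence {R : Type*} [CommRing R] (x : R) (m : ℕ)
    (t : ℕ → R) (ht : ∀ j : ℕ, (x + 1 + j) * t (j + 1) = (j - m) * t j) :
    (x + m) * (x + m - 1) * ∑ j ∈ range (m + 1), (j : R) * t j = -(x * m) * t 0 := by
  set G : ℕ → R := fun j => (x + j) * (m - (x + m) * j) * t j with hG
  have hstep : ∀ j : ℕ, (x + m) * (x + m - 1) * (j * t j) = G (j + 1) - G j := by
    intro j
    simp only [hG]
    push_cast
    linear_combination ((x + m) * (j + 1) - m) * ht j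
  have hlast : G (m + 1) = 0 := by
    simp only [hG]
    push_cast
    linear_combination (m - (x + m) * (m + 1)) * ht m
  rw [mul_sum, sum_congr rfl fun j _ => hstep j, sum_range_sub, hlast]
  simp [hG]

theorem neg_one_pow_mul_descFactorial_mul_factorial_div_recurrence (m Y j : ℕ) :
    ((Y : ℚ) + 1 + j) * ((-1) ^ (j + 1) * m.descFactorial (j + 1) * ((Y ! : ℚ) / (Y + (j + 1))!))
      = ((j : ℚ) - m) * ((-1) ^ j * m.descFactorial j * ((Y ! : ℚ) / (Y + j)!)) := by
  rw [← descPochhammer_eval_eq_descFactorial ℚ, ← descPochhammer_eval_eq_descFactorial ℚ,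
    descPochhammer_succ_eval, ← add_assoc, factorial_succ]
  push_cast
  have : ((Y + j)! : ℚ) ≠ 0 := by positivity
  field_simp
  ring

theorem factorial_div_factorial_sub_eq_descFactorial {m j : ℕ} (h : j ≤ m) :
    (m ! : ℚ) / (m - j)! = m.descFactorial j := by
  rw [div_eq_iff (by positivity), ← factorial_mul_descFactorial h]
  push_cast
  ring

/-- For integers `n ≥ 2` and `0 ≤ Y ≤ n`,
`Σ_{j=0}^{n−Y} (j/n)·(−1)^j · [(n−Y)!/(n−Y−j)!] · [Y!/(Y+j)!] = −Y(n−Y)/(n²(n−1))`. -/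
theorem binomial_comb_identity_two (n Y : ℕ) (hn : 2 ≤ n) (hY : Y ≤ n) :
    ∑ j ∈ Finset.range (n - Y + 1),
        ((j : ℚ) / (n : ℚ)) * (-1 : ℚ) ^ j
          * (((n - Y).factorial : ℚ) / ((n - Y - j).factorial : ℚ))
          * ((Y.factorial : ℚ) / ((Y + j).factorial : ℚ))
    = - ((Y : ℚ) * ((n : ℚ) - (Y : ℚ))) / ((n : ℚ) ^ 2 * ((n : ℚ) - 1)) := by
  set m := n - Y
  have hm : (m : ℚ) = n - Y := Nat.cast_sub hY
  have hsum := mul_sum_range_natCast_mul_of_recurrence (Y : ℚ) m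
    (fun j => (-1) ^ j * m.descFactorial j * ((Y ! : ℚ) / (Y + j)!))
    (neg_one_pow_mul_descFactorial_mul_factorial_div_recurrence m Y)
  rw [hm, add_sub_cancel] at hsum
  have hterm : ∀ j ∈ range (m + 1), (j : ℚ) / n * (-1) ^ j * ((m ! : ℚ) / (m - j)!)
      * ((Y ! : ℚ) / (Y + j)!)
      = (n : ℚ)⁻¹ * (j * ((-1) ^ j * m.descFactorial j * ((Y ! : ℚ) / (Y + j)!))) := by
    intro j hj
    rw [factorial_div_factorial_sub_eq_descFactorial (Nat.lt_succ_iff.mp (mem_range.mp hj))]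
    ring
  have hn1 : (n : ℚ) - 1 ≠ 0 := by
    have : (2 : ℚ) ≤ n := by exact_mod_cast hn
    linarith
  simp only [pow_zero, descFactorial_zero, add_zero, Nat.cast_one, div_self
    (show ((Y ! : ℕ) : ℚ) ≠ 0 by positivity), mul_one] at hsum
  rw [sum_congr rfl hterm, ← mul_sum]
  generalize (∑ j ∈ range (m + 1), _ : ℚ) = S at hsum ⊢
  field_simp
  linear_combination hsum
end

section
/- Let Y ~ Bin(n, θ) with n ≥ 1 and θ ∈ [0,1], and let h : {0,…,n} → ℝ. Define T₁h(y) := 1{y > 0} · Σ_{j=0}^{n−y} h(y+j)·(−1)^j · [(n−y)!/(n−y−j)!]·[y!/(y+j)!]. Then θ·E[h(Y)] − E[T₁h(Y)] = θ(1−θ)^n · Δh, where Δh := Σ_{j=0}^{n} h(j)(−1)^j C(n,j). -/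
/-!
Multiplying by `C(n, y)` turns the factorial ratios in `T₁h(y)` into binomial coefficients:
`C(n, y) T₁h(y) = Σ_{k ≥ y} h(k) (−1)^(k−y) C(n, k)`. After exchanging the sums, the weight of
`h(k) C(n, k)` in `E[T₁h(Y)]` is the alternating sum `Σ_{1 ≤ y ≤ k} (−1)^(k−y) θ^y (1−θ)^(n−y)`, which
telescopes (since `θ^y (1−θ)^(n−y) = θ^(y+1) (1−θ)^(n−y) + θ^y (1−θ)^(n−y+1)`) to
`θ^(k+1) (1−θ)^(n−k) − (−1)^k θ (1−θ)^n`. The first part is `θ` times the weight in `E[h(Y)]`,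
the second produces `θ (1−θ)^n Δh`.
-/

/-- Binomial expectation of `f` under `Bin(n, θ)`. -/
noncomputable def binomExp (n : ℕ) (θ : ℝ) (f : ℕ → ℝ) : ℝ :=
  ∑ k ∈ Finset.range (n + 1), f k * (n.choose k : ℝ) * θ ^ k * (1 - θ) ^ (n - k)

/-- The transform `T₁h(y) = 1{y>0}·Σ_{j=0}^{n−y} h(y+j)(−1)^j [(n−y)!/(n−y−j)!][y!/(y+j)!]`. -/
noncomputable def T1 (n : ℕ) (h : ℕ → ℝ) (y : ℕ) : ℝ :=
  if 0 < y then
    ∑ j ∈ Finset.range (n - y + 1),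
      h (y + j) * (-1 : ℝ) ^ j * (((n - y).factorial : ℝ) / ((n - y - j).factorial : ℝ))
        * ((y.factorial : ℝ) / ((y + j).factorial : ℝ))
  else 0

/-- Alternating binomial sum `Δh = Σ_{j=0}^{n} h(j)(−1)^j C(n,j)`. -/
noncomputable def deltaH (n : ℕ) (h : ℕ → ℝ) : ℝ :=
  ∑ j ∈ Finset.range (n + 1), h j * (-1 : ℝ) ^ j * (n.choose j : ℝ)

open Finset

lemma cast_choose_mul_factorial_div_mul_factorial_div {n y j : ℕ} (h : y + j ≤ n) :
    (n.choose y : ℝ) * (((n - y).factorial : ℝ) / ((n - y - j).factorial : ℝ))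
      * ((y.factorial : ℝ) / ((y + j).factorial : ℝ)) = (n.choose (y + j) : ℝ) := by
  rw [Nat.cast_choose ℝ (by omega : y ≤ n), Nat.cast_choose ℝ h, Nat.sub_sub]
  field_simp

lemma choose_mul_T1 (n : ℕ) (h : ℕ → ℝ) {y : ℕ} (hy : 0 < y) (hyn : y ≤ n) :
    (n.choose y : ℝ) * T1 n h y = ∑ k ∈ Icc y n, h k * (-1) ^ (k - y) * (n.choose k : ℝ) := by
  rw [T1, if_pos hy, mul_sum, ← Ico_add_one_right_eq_Icc, sum_Ico_eq_sum_range,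
    show n + 1 - y = n - y + 1 by omega]
  refine sum_congr rfl fun j hj => ?_
  rw [Nat.add_sub_cancel_left, ← cast_choose_mul_factorial_div_mul_factorial_div
    (by simp at hj; omega : y + j ≤ n)]
  ring

lemma sum_Icc_neg_one_pow_mul_pow_mul_one_sub_pow {R : Type*} [CommRing R] (θ : R) {n k : ℕ}
    (hk : k ≤ n) :
    ∑ y ∈ Icc 1 k, (-1) ^ (k - y) * θ ^ y * (1 - θ) ^ (n - y)
      = θ ^ (k + 1) * (1 - θ) ^ (n - k) - (-1) ^ k * θ * (1 - θ) ^ n := by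
  induction k with
  | zero => simp
  | succ k ih =>
    rw [sum_Icc_succ_top (by omega), Nat.sub_self, ← neg_neg (∑ y ∈ Icc 1 k, _),
      ← sum_neg_distrib]
    have hsucc : ∀ y ∈ Icc 1 k, -((-1 : R) ^ (k + 1 - y) * θ ^ y * (1 - θ) ^ (n - y))
        = (-1) ^ (k - y) * θ ^ y * (1 - θ) ^ (n - y) := fun y hy => by
      rw [show k + 1 - y = k - y + 1 by simp at hy; omega, pow_succ]; ring
    rw [sum_congr rfl hsucc, ih (by omega), show n - k = n - (k + 1) + 1 by omega]
    ring

lemma binomExp_T1 (n : ℕ) (θ : ℝ) (h : ℕ → ℝ) :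
    binomExp n θ (T1 n h) = ∑ k ∈ range (n + 1), h k * (n.choose k : ℝ)
      * (θ ^ (k + 1) * (1 - θ) ^ (n - k) - (-1) ^ k * θ * (1 - θ) ^ n) := by
  have hdrop_zero : binomExp n θ (T1 n h)
      = ∑ y ∈ Icc 1 n, T1 n h y * (n.choose y : ℝ) * θ ^ y * (1 - θ) ^ (n - y) := by
    refine (sum_subset (fun y hy => by simp at hy ⊢; omega) fun y hy hy' => ?_).symm
    obtain rfl : y = 0 := by simp at hy hy'; omega
    simp [T1]
  calc binomExp n θ (T1 n h)
      = ∑ y ∈ Icc 1 n, ∑ k ∈ Icc y n,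
          h k * (n.choose k : ℝ) * ((-1) ^ (k - y) * θ ^ y * (1 - θ) ^ (n - y)) := by
        rw [hdrop_zero]
        refine sum_congr rfl fun y hy => ?_
        simp only [mem_Icc] at hy
        rw [mul_comm (T1 n h y), choose_mul_T1 n h hy.1 hy.2, sum_mul, sum_mul]
        exact sum_congr rfl fun k _ => by ring
    _ = ∑ k ∈ range (n + 1), ∑ y ∈ Icc 1 k,
          h k * (n.choose k : ℝ) * ((-1) ^ (k - y) * θ ^ y * (1 - θ) ^ (n - y)) :=
        sum_comm' fun y k => by simp only [mem_Icc, mem_range]; omega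
    _ = _ := sum_congr rfl fun k hk => by
        rw [← mul_sum, sum_Icc_neg_one_pow_mul_pow_mul_one_sub_pow θ (by simp at hk; omega)]

theorem T1_bias_general (n : ℕ) (θ : ℝ) (h : ℕ → ℝ) :
    θ * binomExp n θ h - binomExp n θ (T1 n h) = θ * (1 - θ) ^ n * deltaH n h := by
  rw [binomExp_T1, binomExp, deltaH, mul_sum, mul_sum, ← sum_sub_distrib]
  exact sum_congr rfl fun k _ => by ring

/-- Bias of the `T₁` transform: `θ·E[h(Y)] − E[T₁h(Y)] = θ(1−θ)^n·Δh`. -/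
theorem T1_bias (n : ℕ) (hn : 1 ≤ n) (θ : ℝ) (hθ : θ ∈ Set.Icc (0 : ℝ) 1) (h : ℕ → ℝ) :
    θ * binomExp n θ h - binomExp n θ (T1 n h) = θ * (1 - θ) ^ n * deltaH n h :=
  T1_bias_general n θ h
end

section
/- Let Y ~ Bin(n, θ) with n ≥ 1 and θ ∈ [0,1], and let h : {0,…,n} → ℝ. Define T₂h(y) := h(y) − 1{y < n} · Σ_{j=0}^{y} h(y−j)·(−1)^j · [y!/(y−j)!]·[(n−y)!/(n−y+j)!]. Then θ·E[h(Y)] − E[T₂h(Y)] = (1−θ)·θ^n·(−1)^{n+1} · Δh, where Δh := Σ_{j=0}^{n} h(j)(−1)^j C(n,j). -/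
/-- The transform `T₂h(y) = h(y) − 1{y<n}·Σ_{j=0}^{y} h(y−j)(−1)^j [y!/(y−j)!][(n−y)!/(n−y+j)!]`. -/
noncomputable def T2 (n : ℕ) (h : ℕ → ℝ) (y : ℕ) : ℝ :=
  h y - (if y < n then
    ∑ j ∈ Finset.range (y + 1),
      h (y - j) * (-1 : ℝ) ^ j * ((y.factorial : ℝ) / ((y - j).factorial : ℝ))
        * (((n - y).factorial : ℝ) / ((n - y + j).factorial : ℝ))
  else 0)

open Finset

lemma factorial_ratio_mul_choose {K : Type*} [Field K] [CharZero K] {n y j : ℕ}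
    (hj : j ≤ y) (hy : y ≤ n) :
    ((y.factorial : K) / ((y - j).factorial : K))
      * (((n - y).factorial : K) / ((n - y + j).factorial : K)) * (n.choose y : K)
    = (n.choose (y - j) : K) := by
  rw [Nat.cast_choose K hy, Nat.cast_choose K ((Nat.sub_le y j).trans hy),
    show n - (y - j) = n - y + j by omega]
  have := y.factorial_ne_zero
  have := (n - y).factorial_ne_zero
  field_simp

lemma neg_one_pow_sub_mul_neg_one_pow {R : Type*} [Monoid R] [HasDistribNeg R] {k y : ℕ}
    (hk : k ≤ y) : (-1 : R) ^ (y - k) * (-1 : R) ^ y = (-1 : R) ^ k := by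
  rw [← pow_add, show y - k + y = 2 * (y - k) + k by omega, pow_add, pow_mul, neg_one_sq,
    one_pow, one_mul]

noncomputable def deltaTerm (n : ℕ) (h : ℕ → ℝ) (k : ℕ) : ℝ :=
  h k * (-1 : ℝ) ^ k * (n.choose k : ℝ)

def altWeight {R : Type*} [CommRing R] (n : ℕ) (θ : R) (y : ℕ) : R :=
  (-θ) ^ y * (1 - θ) ^ (n - y)

lemma altWeight_sub_altWeight_succ {R : Type*} [CommRing R] {n y : ℕ} (θ : R) (hy : y ≤ n) :
    altWeight (n + 1) θ y - altWeight (n + 1) θ (y + 1) = altWeight n θ y := by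
  simp only [altWeight, Nat.add_sub_add_right, show n + 1 - y = n - y + 1 by omega]
  ring

lemma sum_altWeight_mul {R : Type*} [CommRing R] (n : ℕ) (θ : R) (a : ℕ → R) :
    ∑ k ∈ range (n + 1), altWeight (n + 1) θ k * a k
      = altWeight (n + 1) θ n * ∑ k ∈ range (n + 1), a k
        + ∑ y ∈ range n, (∑ k ∈ range (y + 1), a k) * altWeight n θ y := by
  have abel := sum_range_by_parts (altWeight (n + 1) θ) a (n + 1)
  simp only [smul_eq_mul, Nat.add_sub_cancel] at abel
  rw [abel, sub_eq_add_neg, ← sum_neg_distrib]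
  congr 1
  refine sum_congr rfl fun y hy => ?_
  rw [← altWeight_sub_altWeight_succ θ (mem_range.mp hy).le]
  ring

lemma choose_mul_T2_correction (n : ℕ) (h : ℕ → ℝ) {y : ℕ} (hy : y ≤ n) :
    (n.choose y : ℝ) *
      ∑ j ∈ range (y + 1), h (y - j) * (-1 : ℝ) ^ j * ((y.factorial : ℝ) / ((y - j).factorial : ℝ))
        * (((n - y).factorial : ℝ) / ((n - y + j).factorial : ℝ))
      = (-1 : ℝ) ^ y * ∑ k ∈ range (y + 1), deltaTerm n h k := by
  rw [← sum_range_reflect (deltaTerm n h), mul_sum, mul_sum]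
  refine sum_congr rfl fun j hj => ?_
  have hjy : j ≤ y := Nat.lt_succ_iff.mp (mem_range.mp hj)
  rw [Nat.add_sub_cancel, deltaTerm, ← factorial_ratio_mul_choose (K := ℝ) hjy hy]
  linear_combination (-h (y - j) * (n.choose y : ℝ) * ((y.factorial : ℝ) / ((y - j).factorial : ℝ))
    * (((n - y).factorial : ℝ) / ((n - y + j).factorial : ℝ)))
    * neg_one_pow_sub_mul_neg_one_pow (R := ℝ) hjy

lemma binomExp_T2 (n : ℕ) (θ : ℝ) (h : ℕ → ℝ) :
    binomExp n θ (T2 n h) = binomExp n θ h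
      - ∑ y ∈ range n, (∑ k ∈ range (y + 1), deltaTerm n h k) * altWeight n θ y := by
  simp only [binomExp, T2, sub_mul, sum_sub_distrib]
  congr 1
  rw [sum_range_succ, if_neg (lt_irrefl n), zero_mul, zero_mul, zero_mul, add_zero]
  refine sum_congr rfl fun y hy => ?_
  have hyn : y < n := mem_range.mp hy
  rw [if_pos hyn, mul_comm _ (n.choose y : ℝ), choose_mul_T2_correction n h hyn.le, altWeight,
    neg_pow]
  ring

lemma one_sub_mul_binomExp (n : ℕ) (θ : ℝ) (h : ℕ → ℝ) :
    (1 - θ) * binomExp n θ h = ∑ k ∈ range (n + 1), altWeight (n + 1) θ k * deltaTerm n h k := by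
  rw [binomExp, mul_sum]
  refine sum_congr rfl fun k hk => ?_
  have hsq : (-1 : ℝ) ^ k * (-1 : ℝ) ^ k = 1 := by rw [← mul_pow]; norm_num
  rw [altWeight, deltaTerm, neg_pow, show n + 1 - k = n - k + 1 by have := mem_range.mp hk; omega,
    pow_succ]
  linear_combination (-(h k * (n.choose k : ℝ) * θ ^ k * (1 - θ) ^ (n - k) * (1 - θ))) * hsq

theorem T2_bias_general (n : ℕ) (θ : ℝ) (h : ℕ → ℝ) :
    θ * binomExp n θ h - binomExp n θ (T2 n h)
      = (1 - θ) * θ ^ n * (-1 : ℝ) ^ (n + 1) * deltaH n h := by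
  rw [binomExp_T2, show θ * binomExp n θ h = binomExp n θ h - (1 - θ) * binomExp n θ h by ring,
    one_sub_mul_binomExp, sum_altWeight_mul]
  simp only [deltaH, deltaTerm, altWeight, Nat.add_sub_cancel_left, neg_pow θ n]
  ring

/-- Bias of the `T₂` transform: `θ·E[h(Y)] − E[T₂h(Y)] = (1−θ)θ^n(−1)^{n+1}·Δh`. -/
theorem T2_bias (n : ℕ) (hn : 1 ≤ n) (θ : ℝ) (hθ : θ ∈ Set.Icc (0 : ℝ) 1) (h : ℕ → ℝ) :
    θ * binomExp n θ h - binomExp n θ (T2 n h)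
      = (1 - θ) * θ ^ n * (-1 : ℝ) ^ (n + 1) * deltaH n h :=
  T2_bias_general n θ h
end

section
/- Let n ≥ 1, θ ∈ [0,1], Y ~ Bin(n,θ), and define g : {1,…,n} → ℝ by g(y) := Σ_{j=0}^{n−y} h(y+j)·(−1)^j · [(n−y)!/(n−y−j)!]·[(y−1)!/(y+j)!], with g(0) := 0, for a given h : {0,…,n} → ℝ. Then for every y ∈ {0,1,…,n}: y·g(y) + (n−y)·g(y+1) = h(y) − Δh·1{y = 0}, where Δh := Σ_{j=0}^{n} h(j)(−1)^j C(n,j) (and the term (n−y)g(y+1) is interpreted as 0 when y = n). -/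
/-- The auxiliary function `g` of the telescoping identity: `g(0) = 0` and for `y ≥ 1`,
`g(y) = Σ_{j=0}^{n−y} h(y+j)(−1)^j [(n−y)!/(n−y−j)!][(y−1)!/(y+j)!]`. -/
noncomputable def gAux (n : ℕ) (h : ℕ → ℝ) (y : ℕ) : ℝ :=
  if 0 < y then
    ∑ j ∈ Finset.range (n - y + 1),
      h (y + j) * (-1 : ℝ) ^ j * (((n - y).factorial : ℝ) / ((n - y - j).factorial : ℝ))
        * (((y - 1).factorial : ℝ) / ((y + j).factorial : ℝ))
  else 0

/-!
Multiplying `g(y)` by `y` turns `(y-1)!` into `y!`, and multiplying `g(y+1)` by `n - y` turns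
`(n-y-1)!/(n-y-1-j)!` into `(n-y)!/(n-y-(j+1))!`. Both products thus become sums of the same terms
`t(y, j) = h(y+j)(-1)^j [(n-y)!/(n-y-j)!][y!/(y+j)!]`, the first over `0 ≤ j ≤ n-y` and the second,
with the opposite sign, over `1 ≤ j ≤ n-y`; only `t(y, 0) = h(y)` survives. At `y = 0` the first
product is `0` instead of `Σ_j t(0, j)`, which is `Δh`.
-/

open Finset Nat

section

variable (n : ℕ) (h : ℕ → ℝ)

noncomputable def gAuxTerm (y j : ℕ) : ℝ :=
  h (y + j) * (-1 : ℝ) ^ j * (((n - y)! : ℝ) / (n - y - j)!) * ((y ! : ℝ) / (y + j)!)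

@[simp]
lemma gAuxTerm_zero_right (y : ℕ) : gAuxTerm n h y 0 = h y := by
  simp [gAuxTerm, Nat.factorial_ne_zero]

lemma sum_gAuxTerm_zero_left : ∑ j ∈ range (n + 1), gAuxTerm n h 0 j = deltaH n h := by
  refine sum_congr rfl fun j hj => ?_
  rw [Nat.cast_choose ℝ (Nat.lt_succ_iff.mp (mem_range.mp hj))]
  simp only [gAuxTerm, Nat.sub_zero, zero_add, factorial_zero, Nat.cast_one]
  field_simp

lemma natCast_mul_gAux (y : ℕ) :
    (y : ℝ) * gAux n h y = ∑ j ∈ range (n - y + 1), gAuxTerm n h y j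
      - deltaH n h * if y = 0 then 1 else 0 := by
  rcases Nat.eq_zero_or_pos y with rfl | hy
  · simp [gAux, sum_gAuxTerm_zero_left]
  rw [gAux, if_pos hy, if_neg hy.ne', mul_zero, sub_zero, mul_sum]
  refine sum_congr rfl fun j _ => ?_
  rw [gAuxTerm, ← Nat.mul_factorial_pred hy.ne', Nat.cast_mul]
  ring

lemma natCast_mul_factorial_pred_div {m : ℕ} (hm : 0 < m) (j : ℕ) :
    (m : ℝ) * (((m - 1)! : ℝ) / (m - 1 - j)!) = (m ! : ℝ) / (m - (j + 1))! := by
  rw [← Nat.mul_factorial_pred hm.ne', Nat.cast_mul, Nat.sub_sub, add_comm 1 j, mul_div_assoc]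

lemma sub_mul_gAux_succ {y : ℕ} (hy : y ≤ n) :
    ((n : ℝ) - y) * gAux n h (y + 1) = -∑ j ∈ range (n - y), gAuxTerm n h y (j + 1) := by
  rcases hy.eq_or_lt with rfl | hlt
  · simp
  have hm : 0 < n - y := Nat.sub_pos_of_lt hlt
  rw [gAux, if_pos y.succ_pos, ← Nat.cast_sub hy, Nat.sub_succ', Nat.sub_add_cancel hm, mul_sum,
    ← sum_neg_distrib]
  refine sum_congr rfl fun j _ => ?_
  have hfac := natCast_mul_factorial_pred_div hm j
  rw [gAuxTerm, Nat.add_sub_cancel, pow_succ, ← hfac, add_right_comm y 1 j, add_assoc]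
  ring

end

theorem gAux_telescope_general (n : ℕ) (h : ℕ → ℝ) (y : ℕ) (hy : y ≤ n) :
    (y : ℝ) * gAux n h y + ((n : ℝ) - (y : ℝ)) * gAux n h (y + 1)
      = h y - deltaH n h * (if y = 0 then 1 else 0) := by
  rw [natCast_mul_gAux, sub_mul_gAux_succ n h hy, sum_range_succ', gAuxTerm_zero_right]
  ring

/-- Telescoping identity: for every `y ∈ {0,…,n}`,
`y·g(y) + (n−y)·g(y+1) = h(y) − Δh·1{y = 0}`. -/
theorem gAux_telescope (n : ℕ) (hn : 1 ≤ n) (h : ℕ → ℝ) (y : ℕ) (hy : y ≤ n) :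
    (y : ℝ) * gAux n h y + ((n : ℝ) - (y : ℝ)) * gAux n h (y + 1)
      = h y - deltaH n h * (if y = 0 then 1 else 0) :=
  gAux_telescope_general n h y hy
end

section
/- Let n ≥ 1, 1 ≤ m < n, and θ ∈ [0,1]. Let Y ~ Bin(n, θ), and conditionally on Y, let Y⁽¹⁾ be hypergeometric: P(Y⁽¹⁾ = k | Y = y) = C(y, k)·C(n − y, m − k) / C(n, m). Set Y⁽²⁾ := Y − Y⁽¹⁾. Then marginally Y⁽¹⁾ ~ Bin(m, θ), Y⁽²⁾ ~ Bin(n − m, θ), and Y⁽¹⁾ and Y⁽²⁾ are independent. -/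
/-!
Conditionally on `Y = k₁ + k₂`, the hypergeometric weight `C(k₁+k₂, k₁) C(n-k₁-k₂, m-k₁) / C(n, m)`
combines with `C(n, k₁+k₂)` into the multinomial coefficient `n! / (k₁! k₂! (m-k₁)! (n-m-k₂)!)`,
which regroups as `C(n, m) C(m, k₁) C(n-m, k₂)`. The powers of `θ` and `1 - θ` split in the same
way, so the joint pmf factors as `Bin(m, θ)(k₁) · Bin(n-m, θ)(k₂)`; both marginals follow because a
binomial pmf sums to one.
-/

/-- Binomial pmf at `k` for `Bin(n, θ)`. -/
noncomputable def binomPMF (n : ℕ) (θ : ℝ) (k : ℕ) : ℝ :=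
  (n.choose k : ℝ) * θ ^ k * (1 - θ) ^ (n - k)

/-- Joint pmf of `(Y⁽¹⁾, Y⁽²⁾)` under data thinning of `Y ~ Bin(n, θ)` with a
hypergeometric split of parameter `m`:
`P(Y⁽¹⁾=k₁, Y⁽²⁾=k₂) = P(Y = k₁+k₂)·C(k₁+k₂,k₁)·C(n−k₁−k₂, m−k₁)/C(n,m)`. -/
noncomputable def thinJoint (n m : ℕ) (θ : ℝ) (k₁ k₂ : ℕ) : ℝ :=
  binomPMF n θ (k₁ + k₂) *
    (((k₁ + k₂).choose k₁ : ℝ) * ((n - (k₁ + k₂)).choose (m - k₁) : ℝ) / (n.choose m : ℝ))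

open Finset

namespace Nat

theorem choose_add_mul_choose_mul_choose_mul_factorials (a b c d : ℕ) :
    (a + b + (c + d)).choose (a + b) * (a + b).choose a * (c + d).choose c *
      (a ! * b ! * (c ! * d !)) = (a + b + (c + d))! := by
  rw [choose_symm_add, choose_symm_add, choose_symm_add,
    ← add_choose_mul_factorial_mul_factorial (a + b) (c + d),
    ← add_choose_mul_factorial_mul_factorial a b, ← add_choose_mul_factorial_mul_factorial c d]
  ring

theorem choose_add_mul_choose_mul_choose_comm (a b c d : ℕ) :
    (a + b + (c + d)).choose (a + b) * (a + b).choose a * (c + d).choose c =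
      (a + c + (b + d)).choose (a + c) * (a + c).choose a * (b + d).choose b := by
  have hfac : 0 < a ! * b ! * (c ! * d !) := by positivity
  refine eq_of_mul_eq_mul_right hfac ?_
  rw [choose_add_mul_choose_mul_choose_mul_factorials,
    show a ! * b ! * (c ! * d !) = a ! * c ! * (b ! * d !) by ring,
    choose_add_mul_choose_mul_choose_mul_factorials, add_add_add_comm]

end Nat

theorem sum_binomPMF (N : ℕ) (θ : ℝ) : ∑ k ∈ range (N + 1), binomPMF N θ k = 1 := by
  have hexpand := add_pow θ (1 - θ) N
  rw [add_sub_cancel, one_pow] at hexpand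
  rw [hexpand]
  refine sum_congr rfl fun k _ => ?_
  rw [binomPMF]
  ring

theorem thinJoint_eq_binomPMF_mul_binomPMF {n m k₁ k₂ : ℕ} (hmn : m ≤ n) (hk₁ : k₁ ≤ m)
    (hk₂ : k₂ ≤ n - m) (θ : ℝ) :
    thinJoint n m θ k₁ k₂ = binomPMF m θ k₁ * binomPMF (n - m) θ k₂ := by
  obtain ⟨j₁, rfl⟩ := Nat.exists_eq_add_of_le hk₁
  obtain ⟨j₂, hj₂⟩ := Nat.exists_eq_add_of_le hk₂
  obtain rfl : n = k₁ + k₂ + (j₁ + j₂) := by omega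
  have hchoose := Nat.choose_add_mul_choose_mul_choose_comm k₁ k₂ j₁ j₂
  rw [add_add_add_comm k₁ j₁] at hchoose
  have hchoose_real := congrArg (Nat.cast : ℕ → ℝ) hchoose
  push_cast at hchoose_real
  have hpos : 0 < (k₁ + k₂ + (j₁ + j₂)).choose (k₁ + j₁) := Nat.choose_pos hmn
  simp only [thinJoint, binomPMF, hj₂, Nat.add_sub_cancel_left, pow_add]
  field_simp
  linear_combination (θ ^ k₁ * θ ^ k₂ * (1 - θ) ^ j₁ * (1 - θ) ^ j₂) * hchoose_real

theorem data_thinning_general (n m : ℕ) (hmn : m < n) (θ : ℝ) :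
    (∀ k₁ ≤ m, ∑ k₂ ∈ Finset.range (n - m + 1), thinJoint n m θ k₁ k₂
        = binomPMF m θ k₁)
    ∧ (∀ k₂ ≤ n - m, ∑ k₁ ∈ Finset.range (m + 1), thinJoint n m θ k₁ k₂
        = binomPMF (n - m) θ k₂)
    ∧ (∀ k₁ ≤ m, ∀ k₂ ≤ n - m,
        thinJoint n m θ k₁ k₂ = binomPMF m θ k₁ * binomPMF (n - m) θ k₂) := by
  have hprod k₁ (hk₁ : k₁ ≤ m) k₂ (hk₂ : k₂ ≤ n - m) :=
    thinJoint_eq_binomPMF_mul_binomPMF hmn.le hk₁ hk₂ θ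
  refine ⟨fun k₁ hk₁ => ?_, fun k₂ hk₂ => ?_, hprod⟩
  · rw [sum_congr rfl fun k₂ hk₂ => hprod k₁ hk₁ k₂ (Nat.lt_succ_iff.mp (mem_range.mp hk₂)),
      ← mul_sum, sum_binomPMF, mul_one]
  · rw [sum_congr rfl fun k₁ hk₁ => hprod k₁ (Nat.lt_succ_iff.mp (mem_range.mp hk₁)) k₂ hk₂,
      ← sum_mul, sum_binomPMF, one_mul]

/-- Data thinning: the hypergeometric split of `Y ~ Bin(n, θ)` produces marginals
`Y⁽¹⁾ ~ Bin(m, θ)`, `Y⁽²⁾ ~ Bin(n−m, θ)`, and the two pieces are independent. -/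
theorem data_thinning (n m : ℕ) (hm : 1 ≤ m) (hmn : m < n)
    (θ : ℝ) (hθ : θ ∈ Set.Icc (0 : ℝ) 1) :
    (∀ k₁ ≤ m, ∑ k₂ ∈ Finset.range (n - m + 1), thinJoint n m θ k₁ k₂
        = binomPMF m θ k₁)
    ∧ (∀ k₂ ≤ n - m, ∑ k₁ ∈ Finset.range (m + 1), thinJoint n m θ k₁ k₂
        = binomPMF (n - m) θ k₂)
    ∧ (∀ k₁ ≤ m, ∀ k₂ ≤ n - m,
        thinJoint n m θ k₁ k₂ = binomPMF m θ k₁ * binomPMF (n - m) θ k₂) :=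
  data_thinning_general n m hmn θ
end

section
/- Fix an integer n ≥ 2 and real numbers Ȳ ∈ ℝ. For Y ∈ {0,…,n} define κ(Y) := 2[Ȳ − 1{Y ≤ ⌊n/2⌋}] − 2·1{Y > ⌊n/2⌋}·Σ_{j=0}^{n−Y} (−1)^j [(n−Y)!/(n−Y−j)!][Y!/(Y+j)!] + 2·1{Y ≤ ⌊n/2⌋}·Σ_{j=0}^{Y} (−1)^j [Y!/(Y−j)!][(n−Y)!/(n−Y+j)!]. Then κ(Y) = 2(Ȳ − Y/n) for every Y ∈ {0,…,n}. -/
/-!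
Since `a!/(a-j)! · b!/(b+j)! = a! b!/(a+b)! · C(a+b, b+j)`, the sum
`∑_{j ≤ a} (-1)^j a!/(a-j)! · b!/(b+j)!` is `a! b!/(a+b)!` times a partial alternating sum of
row `a + b` of Pascal's triangle. Read backwards that partial sum is the classical
`∑_{k ≤ a} (-1)^k C(m+1, k) = (-1)^a C(m, a)`, so for `b ≥ 1` the whole sum collapses to
`a! b!/(a+b)! · C(a+b-1, a) = b/(a+b)`. Both sums in `κ(Y)` are of this form, with
`(a, b) = (n-Y, Y)` and `(Y, n-Y)`.
-/

open Finset
open scoped Nat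

theorem Int.alternating_sum_range_choose_add_eq_choose (a c : ℕ) :
    ∑ j ∈ Finset.range (a + 1), (-1 : ℤ) ^ j * (a + c + 1).choose (c + 1 + j) =
      (a + c).choose a := by
  have hterm : ∀ j ∈ Finset.range (a + 1),
      (-1 : ℤ) ^ (a + 1 - 1 - j) * (a + c + 1).choose (c + 1 + (a + 1 - 1 - j)) =
        (-1) ^ a * ((-1) ^ j * (a + c + 1).choose j) := by
    intro j hj
    obtain ⟨k, rfl⟩ : ∃ k, a = j + k := ⟨a - j, by grind⟩
    rw [show j + k + 1 - 1 - j = k by omega,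
      Nat.choose_symm_of_eq_add (show j + k + c + 1 = c + 1 + k + j by omega), pow_add,
      mul_mul_mul_comm, ← pow_add, Even.neg_one_pow ⟨j, rfl⟩, one_mul, mul_comm]
  rw [← sum_range_reflect, sum_congr rfl hterm, ← mul_sum,
    Int.alternating_sum_range_choose_eq_choose, ← mul_assoc, ← pow_add,
    Even.neg_one_pow ⟨a, rfl⟩, one_mul]

section Field

variable {K : Type*} [Field K] [CharZero K]

theorem factorial_div_mul_factorial_div_eq {a j : ℕ} (b : ℕ) (hj : j ≤ a) :
    (a ! : K) / (a - j)! * (b ! / (b + j)!) = a ! * b ! / (a + b)! * (a + b).choose (b + j) := by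
  rw [Nat.cast_choose K (by omega : b + j ≤ a + b), show a + b - (b + j) = a - j by omega]
  field_simp [Nat.factorial_ne_zero]

theorem sum_neg_one_pow_mul_factorial_div_mul_factorial_div (a : ℕ) {b : ℕ} (hb : 0 < b) :
    ∑ j ∈ range (a + 1), (-1 : K) ^ j * ((a ! : K) / (a - j)!) * ((b ! : K) / (b + j)!) =
      b / (a + b : ℕ) := by
  obtain ⟨c, rfl⟩ : ∃ c, b = c + 1 := ⟨b - 1, by omega⟩
  have hchoose : ∑ j ∈ range (a + 1), (-1 : K) ^ j * ((a + (c + 1)).choose (c + 1 + j) : K) =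
      (a + c).choose a := by
    rw [← add_assoc]
    exact_mod_cast Int.alternating_sum_range_choose_add_eq_choose a c
  calc ∑ j ∈ range (a + 1), (-1 : K) ^ j * ((a ! : K) / (a - j)!) * (((c + 1)! : K) / (c + 1 + j)!)
      = (a ! * (c + 1)! / (a + (c + 1))! : K) *
          ∑ j ∈ range (a + 1), (-1 : K) ^ j * ((a + (c + 1)).choose (c + 1 + j) : K) := by
        rw [mul_sum]
        refine sum_congr rfl fun j hj => ?_
        rw [mul_assoc, factorial_div_mul_factorial_div_eq _ (Nat.lt_succ_iff.mp (mem_range.mp hj))]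
        ring
    _ = (c + 1 : ℕ) / (a + (c + 1) : ℕ) := by
        rw [hchoose, Nat.cast_choose K (Nat.le_add_right a c), Nat.add_sub_cancel_left,
          ← add_assoc, Nat.factorial_succ, Nat.factorial_succ (a + c)]
        push_cast
        field_simp [Nat.factorial_ne_zero]

end Field

/-- Simplification of the SURE linear-coefficient weight: for every `Y ∈ {0,…,n}`,
`κ(Y) = 2(Ȳ − Y/n)`. -/
theorem kappa_simplification (n : ℕ) (hn : 2 ≤ n) (Ybar : ℝ) (Y : ℕ) (hY : Y ≤ n) :
    2 * (Ybar - (if Y ≤ n / 2 then 1 else 0))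
      - 2 * (if n / 2 < Y then 1 else 0) *
          (∑ j ∈ Finset.range (n - Y + 1),
            (-1 : ℝ) ^ j * (((n - Y).factorial : ℝ) / ((n - Y - j).factorial : ℝ))
              * ((Y.factorial : ℝ) / ((Y + j).factorial : ℝ)))
      + 2 * (if Y ≤ n / 2 then 1 else 0) *
          (∑ j ∈ Finset.range (Y + 1),
            (-1 : ℝ) ^ j * ((Y.factorial : ℝ) / ((Y - j).factorial : ℝ))
              * (((n - Y).factorial : ℝ) / ((n - Y + j).factorial : ℝ)))
    = 2 * (Ybar - (Y : ℝ) / (n : ℝ)) := by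
  have hn0 : (n : ℝ) ≠ 0 := by norm_cast; omega
  by_cases hsmall : Y ≤ n / 2
  · rw [if_pos hsmall, if_neg (not_lt.mpr hsmall),
      sum_neg_one_pow_mul_factorial_div_mul_factorial_div Y (by omega : 0 < n - Y),
      Nat.add_sub_cancel' hY, Nat.cast_sub hY]
    field_simp
    ring
  · rw [if_neg hsmall, if_pos (not_le.mp hsmall),
      sum_neg_one_pow_mul_factorial_div_mul_factorial_div (n - Y) (by omega : 0 < Y),
      Nat.sub_add_cancel hY]
    field_simp
    ring
end
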